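/- arXiv:2109.13350 — 2 statements merged into one kernel-verified Lean document; each statement's English description precedes it below -/
import Mathlib

section
/- A bounded linear operator T on a complex Banach space belongs to class (ab_e) if and only if T belongs to class (ab) and σ_e(T) = σ_w(T). -/
open Filter Topology

variable {X : Type*} [NormedAddCommGroup X] [NormedSpace ℂ X] [CompleteSpace X]

/-- `S` is a Fredholm operator. -/
def IsFredholm (S : X →L[ℂ] X) : Prop :=
  FiniteDimensional ℂ (LinearMap.ker (S : X →ₗ[ℂ] X)) ∧
  IsClosed ((LinearMap.range (S : X →ₗ[ℂ] X) : Submodule ℂ X) : Set X) ∧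
  FiniteDimensional ℂ (X ⧸ LinearMap.range (S : X →ₗ[ℂ] X))

/-- `S` is a Weyl operator: Fredholm of index zero. -/
def IsWeyl (S : X →L[ℂ] X) : Prop :=
  IsFredholm S ∧
  Module.finrank ℂ (LinearMap.ker (S : X →ₗ[ℂ] X)) = Module.finrank ℂ (X ⧸ LinearMap.range (S : X →ₗ[ℂ] X))

/-- `S` is a B-Fredholm operator: for some `n`, `R(S^n)` is closed and the restriction
`S_[n] : R(S^n) → R(S^n)` is Fredholm (its kernel is `ker S ⊓ R(S^n)`, its range is
`R(S^(n+1))`). -/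
def IsBFredholm (S : X →L[ℂ] X) : Prop :=
  ∃ n : ℕ, IsClosed ((LinearMap.range ((S ^ n : X →L[ℂ] X) : X →ₗ[ℂ] X) : Submodule ℂ X) : Set X) ∧
    IsClosed ((LinearMap.range ((S ^ (n + 1) : X →L[ℂ] X) : X →ₗ[ℂ] X) : Submodule ℂ X) : Set X) ∧
    FiniteDimensional ℂ ↥(LinearMap.ker (S : X →ₗ[ℂ] X) ⊓ LinearMap.range ((S ^ n : X →L[ℂ] X) : X →ₗ[ℂ] X)) ∧
    FiniteDimensional ℂ (↥(LinearMap.range ((S ^ n : X →L[ℂ] X) : X →ₗ[ℂ] X)) ⧸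
      Submodule.comap (LinearMap.range ((S ^ n : X →L[ℂ] X) : X →ₗ[ℂ] X)).subtype (LinearMap.range ((S ^ (n + 1) : X →L[ℂ] X) : X →ₗ[ℂ] X)))

/-- `S` is a B-Weyl operator: B-Fredholm of index zero. -/
def IsBWeyl (S : X →L[ℂ] X) : Prop :=
  ∃ n : ℕ, IsClosed ((LinearMap.range ((S ^ n : X →L[ℂ] X) : X →ₗ[ℂ] X) : Submodule ℂ X) : Set X) ∧
    IsClosed ((LinearMap.range ((S ^ (n + 1) : X →L[ℂ] X) : X →ₗ[ℂ] X) : Submodule ℂ X) : Set X) ∧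
    FiniteDimensional ℂ ↥(LinearMap.ker (S : X →ₗ[ℂ] X) ⊓ LinearMap.range ((S ^ n : X →L[ℂ] X) : X →ₗ[ℂ] X)) ∧
    FiniteDimensional ℂ (↥(LinearMap.range ((S ^ n : X →L[ℂ] X) : X →ₗ[ℂ] X)) ⧸
      Submodule.comap (LinearMap.range ((S ^ n : X →L[ℂ] X) : X →ₗ[ℂ] X)).subtype (LinearMap.range ((S ^ (n + 1) : X →L[ℂ] X) : X →ₗ[ℂ] X))) ∧
    Module.finrank ℂ ↥(LinearMap.ker (S : X →ₗ[ℂ] X) ⊓ LinearMap.range ((S ^ n : X →L[ℂ] X) : X →ₗ[ℂ] X)) =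
      Module.finrank ℂ (↥(LinearMap.range ((S ^ n : X →L[ℂ] X) : X →ₗ[ℂ] X)) ⧸
        Submodule.comap (LinearMap.range ((S ^ n : X →L[ℂ] X) : X →ₗ[ℂ] X)).subtype (LinearMap.range ((S ^ (n + 1) : X →L[ℂ] X) : X →ₗ[ℂ] X)))

/-- `S` has finite ascent. -/
def HasFiniteAscent (S : X →L[ℂ] X) : Prop :=
  ∃ n : ℕ, LinearMap.ker ((S ^ n : X →L[ℂ] X) : X →ₗ[ℂ] X) = LinearMap.ker ((S ^ (n + 1) : X →L[ℂ] X) : X →ₗ[ℂ] X)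

/-- `S` has finite descent. -/
def HasFiniteDescent (S : X →L[ℂ] X) : Prop :=
  ∃ n : ℕ, LinearMap.range ((S ^ n : X →L[ℂ] X) : X →ₗ[ℂ] X) = LinearMap.range ((S ^ (n + 1) : X →L[ℂ] X) : X →ₗ[ℂ] X)

/-- The approximate point spectrum of `T`: points `λ` where `T - λ` is not bounded below. -/
def sigma_a (T : X →L[ℂ] X) : Set ℂ :=
  {l : ℂ | ¬ ∃ c > (0 : ℝ), ∀ x : X, c * ‖x‖ ≤ ‖(T - l • 1) x‖}

/-- The essential spectrum of `T`. -/
def sigma_e (T : X →L[ℂ] X) : Set ℂ := {l : ℂ | ¬ IsFredholm (T - l • 1)}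

/-- The Weyl spectrum of `T`. -/
def sigma_w (T : X →L[ℂ] X) : Set ℂ := {l : ℂ | ¬ IsWeyl (T - l • 1)}

/-- The B-Fredholm spectrum of `T`. -/
def sigma_bf (T : X →L[ℂ] X) : Set ℂ := {l : ℂ | ¬ IsBFredholm (T - l • 1)}

/-- The B-Weyl spectrum of `T`. -/
def sigma_bw (T : X →L[ℂ] X) : Set ℂ := {l : ℂ | ¬ IsBWeyl (T - l • 1)}

/-- The poles of the resolvent of `T`: spectral points with finite ascent and descent. -/
def poles (T : X →L[ℂ] X) : Set ℂ :=
  {l : ℂ | l ∈ spectrum ℂ T ∧ HasFiniteAscent (T - l • 1) ∧ HasFiniteDescent (T - l • 1)}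

/-- The poles of `T` of finite rank. -/
def poles0 (T : X →L[ℂ] X) : Set ℂ :=
  {l : ℂ | l ∈ poles T ∧ FiniteDimensional ℂ (LinearMap.ker ((T - l • 1 : X →L[ℂ] X) : X →ₗ[ℂ] X))}

/-- The left poles of `T`: points `λ ∈ σ_a(T)` with `p = p(T-λ) < ∞` and `R((T-λ)^(p+1))`
closed. -/
def leftPoles (T : X →L[ℂ] X) : Set ℂ :=
  {l : ℂ | l ∈ sigma_a T ∧ ∃ p : ℕ,
    LinearMap.ker (((T - l • 1) ^ p : X →L[ℂ] X) : X →ₗ[ℂ] X) = LinearMap.ker (((T - l • 1) ^ (p + 1) : X →L[ℂ] X) : X →ₗ[ℂ] X) ∧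
    (∀ m : ℕ, m < p → LinearMap.ker (((T - l • 1) ^ m : X →L[ℂ] X) : X →ₗ[ℂ] X) ≠ LinearMap.ker (((T - l • 1) ^ (m + 1) : X →L[ℂ] X) : X →ₗ[ℂ] X)) ∧
    IsClosed ((LinearMap.range (((T - l • 1) ^ (p + 1) : X →L[ℂ] X) : X →ₗ[ℂ] X) : Submodule ℂ X) : Set X)}

/-- The left poles of `T` of finite rank. -/
def leftPoles0 (T : X →L[ℂ] X) : Set ℂ :=
  {l : ℂ | l ∈ leftPoles T ∧ FiniteDimensional ℂ (LinearMap.ker ((T - l • 1 : X →L[ℂ] X) : X →ₗ[ℂ] X))}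

/-- The isolated points of a subset of `ℂ`. -/
def isoPts (A : Set ℂ) : Set ℂ := {l : ℂ | l ∈ A ∧ ¬ AccPt l (𝓟 A)}

/-- `E(T)`: isolated spectral points that are eigenvalues. -/
def Eset (T : X →L[ℂ] X) : Set ℂ :=
  {l : ℂ | l ∈ isoPts (spectrum ℂ T) ∧ LinearMap.ker ((T - l • 1 : X →L[ℂ] X) : X →ₗ[ℂ] X) ≠ ⊥}

/-- `E⁰(T)`: isolated spectral points that are eigenvalues of finite multiplicity. -/
def Eset0 (T : X →L[ℂ] X) : Set ℂ :=
  {l : ℂ | l ∈ isoPts (spectrum ℂ T) ∧ LinearMap.ker ((T - l • 1 : X →L[ℂ] X) : X →ₗ[ℂ] X) ≠ ⊥ ∧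
    FiniteDimensional ℂ (LinearMap.ker ((T - l • 1 : X →L[ℂ] X) : X →ₗ[ℂ] X))}

/-- `E_a(T)`: isolated points of the approximate point spectrum that are eigenvalues. -/
def Ea (T : X →L[ℂ] X) : Set ℂ :=
  {l : ℂ | l ∈ isoPts (sigma_a T) ∧ LinearMap.ker ((T - l • 1 : X →L[ℂ] X) : X →ₗ[ℂ] X) ≠ ⊥}

/-- `E_a⁰(T)`: isolated points of `σ_a(T)` that are eigenvalues of finite multiplicity. -/
def Ea0 (T : X →L[ℂ] X) : Set ℂ :=
  {l : ℂ | l ∈ isoPts (sigma_a T) ∧ LinearMap.ker ((T - l • 1 : X →L[ℂ] X) : X →ₗ[ℂ] X) ≠ ⊥ ∧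
    FiniteDimensional ℂ (LinearMap.ker ((T - l • 1 : X →L[ℂ] X) : X →ₗ[ℂ] X))}

/-!
`σ_e(T) ⊆ σ_w(T)` always holds, so the content is that under `(ab_e)` every Fredholm `S = T - λ`
has index zero. Off the spectrum `S` is invertible. For `λ ∈ σ(T) \ σ_e(T)`, `λ` is a left pole,
so `S` has finite ascent `p` and is bounded below on the closed subspace `R(S^p)`. For small
`η ≠ 0` the operator `S - η` is still Fredholm (Fredholm operators form an open set) and injective
(its eigenvectors lie in `R(S^p)`); a non-surjective `S - η` would be a left pole by `(ab_e)` and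
have a nonzero kernel, so `S - η` is invertible. On `R(S^p)`, `S` is then a small perturbation of
an invertible operator, so `S` maps `R(S^p)` onto itself and has finite descent. Hence
`X = N(S^p) ⊕ R(S^p)`, and the index of `S` is that of its restriction to the finite-dimensional
`N(S^p)`, which is zero.
-/

namespace Module.End

open LinearMap Submodule

variable {K V : Type*} [DivisionRing K] [AddCommGroup V] [Module K V]

theorem finiteDimensional_ker_pow (f : End K V) [FiniteDimensional K (ker f)] (n : ℕ) :
    FiniteDimensional K (ker (f ^ n)) := by
  induction n with
  | zero => rw [pow_zero, one_eq_id, ker_id]; infer_instance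
  | succ n ih =>
    rw [pow_succ, mul_eq_comp, ker_comp]
    refine Module.Finite.iff_fg.2 (fg_of_fg_map_of_fg_inf_ker f ?_ ?_)
    · exact Module.Finite.iff_fg.1 (finiteDimensional_of_le (map_comap_le f _))
    · exact Module.Finite.iff_fg.1 (finiteDimensional_of_le inf_le_right)

theorem mem_range_pow_of_apply_eq_smul {f : End K V} {η : K} (hη : η ≠ 0) {x : V}
    (hx : f x = η • x) (n : ℕ) : x ∈ range (f ^ n) := by
  have hpow : ∀ n : ℕ, (f ^ n) x = η ^ n • x := by
    intro n
    induction n with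
    | zero => simp
    | succ n ih => rw [pow_succ', mul_apply, ih, map_smul, hx, smul_smul, pow_succ]
  exact ⟨(η ^ n)⁻¹ • x, by rw [map_smul, hpow, smul_smul, inv_mul_cancel₀ (pow_ne_zero n hη),
    one_smul]⟩

theorem ker_inf_range_pow_eq_bot (f : End K V) {p : ℕ} (hker : ker (f ^ p) = ker (f ^ (p + 1))) :
    ker f ⊓ range (f ^ p) = ⊥ := by
  refine eq_bot_iff.2 ?_
  rintro _ ⟨hx, y, rfl⟩
  have hy : y ∈ ker (f ^ (p + 1)) := by rwa [LinearMap.mem_ker, pow_succ', mul_apply]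
  rw [← hker] at hy
  exact hy

theorem finrank_ker_eq_finrank_quotient_range_of_isCompl (f : End K V) {N M : Submodule K V}
    (hNM : IsCompl N M) [FiniteDimensional K N] (hN : ∀ x ∈ N, f x ∈ N) (hM : M.map f = M)
    (hker : ker f ⊓ M = ⊥) :
    finrank K (ker f) = finrank K (V ⧸ range f) := by
  have hdecomp (x : V) : ∃ a ∈ N, ∃ b ∈ M, a + b = x :=
    mem_sup.1 (hNM.sup_eq_top ▸ mem_top)
  have hfM {b : V} (hb : b ∈ M) (hfb : f b ∈ N) : f b = 0 :=
    (disjoint_def.1 hNM.disjoint) _ hfb (hM ▸ mem_map_of_mem hb)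
  have hkerN : ker f ≤ N := by
    intro x hx
    obtain ⟨a, ha, b, hb, rfl⟩ := hdecomp x
    have hfb : f b = -f a := eq_neg_of_add_eq_zero_right (by rwa [← map_add])
    have hfb0 : f b = 0 := hfM hb (hfb ▸ N.neg_mem (hN a ha))
    have hb0 : b = 0 := (mem_bot K).1 <| hker ▸ ⟨hfb0, hb⟩
    simpa [hb0] using ha
  set g := f.restrict hN
  let π := (range f).mkQ ∘ₗ N.subtype
  have hπ_surj : Function.Surjective π := by
    intro z
    obtain ⟨x, rfl⟩ := mkQ_surjective _ z
    obtain ⟨a, ha, b, hb, rfl⟩ := hdecomp x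
    obtain ⟨m, -, rfl⟩ := mem_map.1 (hM.symm ▸ hb : b ∈ M.map f)
    exact ⟨⟨a, ha⟩, (Submodule.Quotient.eq _).2 ⟨-m, by simp⟩⟩
  have hπ_ker : ker π = range g := by
    ext ⟨n, hn⟩
    simp only [π, ker_comp, ker_mkQ, Submodule.mem_comap, subtype_apply, mem_range]
    constructor
    · rintro ⟨y, rfl⟩
      obtain ⟨a, ha, b, hb, rfl⟩ := hdecomp y
      have hfb : f b = f (a + b) - f a := by rw [map_add]; abel
      refine ⟨⟨a, ha⟩, Subtype.ext ?_⟩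
      simp [g, hfM hb (hfb ▸ N.sub_mem hn (hN a ha))]
    · rintro ⟨a, ha⟩
      exact ⟨a, congrArg Subtype.val ha⟩
  have hker_g : finrank K (ker g) = finrank K (ker f) := by
    rw [ker_restrict]
    exact (comapSubtypeEquivOfLe hkerN).finrank_eq
  have hquot : finrank K (N ⧸ range g) = finrank K (V ⧸ range f) :=
    ((quotEquivOfEq _ _ hπ_ker.symm).trans (π.quotKerEquivOfSurjective hπ_surj)).finrank_eq
  have := g.finrank_range_add_finrank_ker
  have := (range g).finrank_quotient_add_finrank
  omega

theorem isCompl_ker_pow_range_pow (f : End K V) {p : ℕ} (hker : ker (f ^ p) = ker (f ^ (p + 1)))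
    (hmap : (range (f ^ p)).map f = range (f ^ p)) :
    IsCompl (ker (f ^ p)) (range (f ^ p)) := by
  have hmap_pow (n : ℕ) : (range (f ^ p)).map (f ^ n) = range (f ^ p) := by
    induction n with
    | zero => rw [pow_zero, one_eq_id, Submodule.map_id]
    | succ n ih => rw [pow_succ, mul_eq_comp, map_comp, hmap, ih]
  constructor
  · rw [disjoint_def]
    rintro _ hx ⟨y, rfl⟩
    have hy : y ∈ ker (f ^ (p + p)) := by rwa [LinearMap.mem_ker, pow_add, mul_apply]
    rwa [← ker_pow_constant hker p] at hy
  · rw [codisjoint_iff, eq_top_iff]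
    intro x _
    obtain ⟨m, hm, hfm⟩ := mem_map.1 ((hmap_pow p).symm ▸ mem_range_self (f ^ p) x :
      (f ^ p) x ∈ (range (f ^ p)).map (f ^ p))
    refine mem_sup.2 ⟨x - m, ?_, m, hm, sub_add_cancel x m⟩
    rw [LinearMap.mem_ker, map_sub, hfm, sub_self]

theorem finrank_ker_eq_finrank_quotient_range (f : End K V) [FiniteDimensional K (ker f)] {p : ℕ}
    (hker : ker (f ^ p) = ker (f ^ (p + 1))) (hrange : range (f ^ (p + 1)) = range (f ^ p)) :
    finrank K (ker f) = finrank K (V ⧸ range f) := by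
  have hmap : (range (f ^ p)).map f = range (f ^ p) := by
    rw [← range_comp, ← mul_eq_comp, ← pow_succ', hrange]
  have hcompl := isCompl_ker_pow_range_pow f hker hmap
  have := finiteDimensional_ker_pow f p
  refine finrank_ker_eq_finrank_quotient_range_of_isCompl f hcompl (fun x hx ↦ ?_) hmap
    (ker_inf_range_pow_eq_bot f hker)
  rw [LinearMap.mem_ker, ← mul_apply, ← pow_succ, pow_succ', mul_apply, LinearMap.mem_ker.1 hx,
    map_zero]

end Module.End

namespace ContinuousLinearMap

section

variable {𝕜 E F : Type*} [RCLike 𝕜] [NormedAddCommGroup E] [NormedSpace 𝕜 E] [CompleteSpace E]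
  [NormedAddCommGroup F] [NormedSpace 𝕜 F] [CompleteSpace F]

theorem isClosed_map_of_finiteDimensional_ker (f : E →L[𝕜] F) [FiniteDimensional 𝕜 f.ker]
    (hf : IsClosed (f.range : Set F)) {W : Submodule 𝕜 E} (hW : IsClosed (W : Set E)) :
    IsClosed (W.map (f : E →ₗ[𝕜] F) : Set F) := by
  obtain ⟨E₁, hE₁, hcompl⟩ :=
    (Submodule.ClosedComplemented.of_finiteDimensional f.ker).exists_isClosed_isCompl
  have : CompleteSpace E₁ := hE₁.completeSpace_coe
  set g := f ∘L E₁.subtypeL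
  have hdecomp (x : E) : ∃ k, f k = 0 ∧ ∃ x₁ ∈ E₁, k + x₁ = x :=
    Submodule.mem_sup.1 (hcompl.sup_eq_top ▸ Submodule.mem_top)
  have hg_inj : Function.Injective g := by
    refine (injective_iff_map_eq_zero g).2 fun x hx ↦ Subtype.ext ?_
    exact (Submodule.disjoint_def.1 hcompl.disjoint) _ hx x.2
  have hg_range : Set.range g = f.range := by
    ext y
    constructor
    · rintro ⟨x, rfl⟩
      exact ⟨x, rfl⟩
    · rintro ⟨x, rfl⟩
      obtain ⟨k, hk, x₁, hx₁, rfl⟩ := hdecomp x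
      exact ⟨⟨x₁, hx₁⟩, by simp [g, hk]⟩
  obtain ⟨K, hK⟩ := g.antilipschitz_of_injective_of_isClosed_range hg_inj (hg_range ▸ hf)
  have hclosed : IsClosed {x₁ : E₁ | (x₁ : E) ∈ W ⊔ f.ker} :=
    (W.isClosed_sup_finiteDimensional f.ker hW).preimage continuous_subtype_val
  convert (hK.isClosedEmbedding g.uniformContinuous).isClosedMap _ hclosed using 1
  ext y
  constructor
  · rintro ⟨w, hw, rfl⟩
    obtain ⟨k, hk, x₁, hx₁, rfl⟩ := hdecomp w
    refine ⟨⟨x₁, hx₁⟩, ?_, by simp [g, hk]⟩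
    have hx₁ : (k + x₁) + -k = x₁ := by abel
    change x₁ ∈ W ⊔ f.ker
    rw [← hx₁]
    exact Submodule.add_mem_sup hw (neg_mem (show k ∈ f.ker from hk))
  · rintro ⟨x₁, hx₁, rfl⟩
    obtain ⟨w, hw, k, hk, hwk⟩ := Submodule.mem_sup.1 hx₁
    have hk : f k = 0 := hk
    exact ⟨w, hw, by simp [g, ← hwk, hk]⟩

end

variable {𝕜 E : Type*} [NontriviallyNormedField 𝕜] [NormedAddCommGroup E] [NormedSpace 𝕜 E]

theorem ker_sub_smul_one_eq_bot {S : E →L[𝕜] E} {p : ℕ} {c : ℝ}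
    (hc : ∀ x ∈ (S ^ p).range, c * ‖x‖ ≤ ‖S x‖) {η : 𝕜} (hη₀ : η ≠ 0) (hη : ‖η‖ < c) :
    (S - η • 1).ker = ⊥ := by
  refine eq_bot_iff.2 fun x (hx : S x - η • x = 0) ↦ (Submodule.mem_bot 𝕜).2 ?_
  have hSx : S x = η • x := sub_eq_zero.1 hx
  have hxM : x ∈ (S ^ p).range := by
    rw [toLinearMap_pow]
    exact Module.End.mem_range_pow_of_apply_eq_smul hη₀ hSx p
  have := hc x hxM
  rw [hSx, norm_smul] at this
  exact norm_eq_zero.1 (by nlinarith [norm_nonneg x])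

theorem exists_bound_of_ker_inf_range_pow_eq_bot [CompleteSpace E] {S : E →L[𝕜] E} {p : ℕ}
    (hM : IsClosed ((S ^ p).range : Set E)) (hSM : IsClosed ((S ^ (p + 1)).range : Set E))
    (hker : S.ker ⊓ (S ^ p).range = ⊥) :
    ∃ c > 0, ∀ x ∈ (S ^ p).range, c * ‖x‖ ≤ ‖S x‖ := by
  set M := (S ^ p).range
  have : CompleteSpace M := hM.completeSpace_coe
  have hmaps : ∀ x ∈ M, S x ∈ M := by
    rintro _ ⟨y, rfl⟩
    exact ⟨S y, by rw [coe_coe, ← mul_apply_eq_comp, ← mul_apply_eq_comp, pow_mul_comm']⟩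
  let A : M →L[𝕜] M := S.restrict hmaps
  have hA_inj : Function.Injective A := by
    refine (injective_iff_map_eq_zero _).2 fun x hx ↦ Subtype.ext ?_
    exact (Submodule.mem_bot 𝕜).1 (hker ▸ ⟨congrArg Subtype.val hx, x.2⟩)
  have hA_range : Set.range A = Subtype.val ⁻¹' ((S ^ (p + 1)).range : Set E) := by
    ext ⟨y, hy⟩
    constructor
    · rintro ⟨⟨_, z, rfl⟩, hz⟩
      exact ⟨z, by rw [coe_coe, pow_succ', mul_apply_eq_comp]; exact congrArg Subtype.val hz⟩
    · rintro ⟨z, hz⟩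
      refine ⟨⟨(S ^ p) z, z, rfl⟩, Subtype.ext ?_⟩
      rw [coe_coe, pow_succ', mul_apply_eq_comp] at hz
      exact hz
  obtain ⟨K, hK⟩ := A.antilipschitz_of_injective_of_isClosed_range hA_inj
    (hA_range ▸ hSM.preimage continuous_subtype_val)
  refine ⟨(K + 1 : ℝ)⁻¹, by positivity, fun x hx ↦ ?_⟩
  rw [inv_mul_le_iff₀ (by positivity)]
  calc ‖x‖ = ‖(⟨x, hx⟩ : M)‖ := rfl
    _ ≤ K * ‖S x‖ := A.bound_of_antilipschitz hK _
    _ ≤ (K + 1) * ‖S x‖ := by gcongr; linarith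

theorem isUnit_of_surjective_sub_smul_one [CompleteSpace E] (A : E →L[𝕜] E) {c : ℝ} {η : 𝕜}
    (hA : ∀ x, c * ‖x‖ ≤ ‖A x‖) (hη : 2 * ‖η‖ < c)
    (hsurj : Function.Surjective (A - η • 1 : E →L[𝕜] E)) : IsUnit A := by
  -- otherwise `‖u⁻¹‖⁻¹` below would be the junk value `0⁻¹ = 0`
  nontriviality E →L[𝕜] E
  have hc : 0 < c - ‖η‖ := by linarith [norm_nonneg η]
  have hB (x : E) : (c - ‖η‖) * ‖x‖ ≤ ‖(A - η • 1) x‖ := by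
    calc (c - ‖η‖) * ‖x‖ = c * ‖x‖ - ‖η • x‖ := by rw [norm_smul]; ring
      _ ≤ ‖A x‖ - ‖η • x‖ := by gcongr; exact hA x
      _ ≤ ‖A x - η • x‖ := norm_sub_norm_le _ _
      _ = ‖(A - η • 1) x‖ := rfl
  have hinj : Function.Injective (A - η • 1 : E →L[𝕜] E) := by
    refine (injective_iff_map_eq_zero _).2 fun x hx ↦ norm_eq_zero.1 ?_
    have := hB x
    rw [hx, norm_zero] at this
    nlinarith [norm_nonneg x]
  obtain ⟨u, hu⟩ := isUnit_iff_bijective.2 ⟨hinj, hsurj⟩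
  have hu_inv : ‖(↑u⁻¹ : E →L[𝕜] E)‖ ≤ (c - ‖η‖)⁻¹ := by
    refine opNorm_le_bound _ (inv_nonneg.2 hc.le) fun y ↦ ?_
    rw [inv_mul_eq_div, le_div_iff₀' hc]
    calc (c - ‖η‖) * ‖(↑u⁻¹ : E →L[𝕜] E) y‖ ≤ ‖(A - η • 1) ((↑u⁻¹ : E →L[𝕜] E) y)‖ := hB _
      _ = ‖y‖ := by rw [← hu]; exact congrArg norm (DFunLike.congr_fun u.mul_inv y)
  have hnear : ‖A - ↑u‖ < ‖(↑u⁻¹ : E →L[𝕜] E)‖⁻¹ := by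
    calc ‖A - ↑u‖ = ‖η • (1 : E →L[𝕜] E)‖ := by rw [hu, sub_sub_cancel]
      _ ≤ ‖η‖ := by rw [norm_smul]; exact mul_le_of_le_one_right (norm_nonneg η) norm_id_le
      _ < c - ‖η‖ := by linarith
      _ ≤ ‖(↑u⁻¹ : E →L[𝕜] E)‖⁻¹ := by
        rwa [le_inv_comm₀ hc (norm_pos_iff.2 u⁻¹.ne_zero)]
  exact ⟨u.ofNearby A hnear, Units.val_ofNearby _ _ _⟩

theorem range_pow_succ_eq_of_range_sub_smul_one_eq_top [CompleteSpace E] {S : E →L[𝕜] E}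
    {p : ℕ} (hM : IsClosed ((S ^ p).range : Set E)) {c : ℝ}
    (hc : ∀ x ∈ (S ^ p).range, c * ‖x‖ ≤ ‖S x‖) {η : 𝕜} (hη : 2 * ‖η‖ < c)
    (hsurj : (S - η • 1).range = ⊤) :
    (S ^ (p + 1)).range = (S ^ p).range := by
  set M := (S ^ p).range
  have : CompleteSpace M := hM.completeSpace_coe
  have hcomm (w : E) : (S ^ p) (S w) = S ((S ^ p) w) := by
    rw [← mul_apply_eq_comp, ← mul_apply_eq_comp, pow_mul_comm']
  have hSM : ∀ x ∈ M, S x ∈ M := by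
    rintro _ ⟨y, rfl⟩
    exact ⟨S y, hcomm y⟩
  let A : M →L[𝕜] M := S.restrict hSM
  have hA_surj : Function.Surjective (A - η • 1 : M →L[𝕜] M) := by
    rintro ⟨_, z, rfl⟩
    obtain ⟨w, hw⟩ := LinearMap.range_eq_top.1 hsurj z
    refine ⟨⟨(S ^ p) w, w, rfl⟩, Subtype.ext ?_⟩
    change S ((S ^ p) w) - η • (S ^ p) w = (S ^ p) z
    rw [← hw, coe_coe, sub_apply, map_sub, hcomm, smul_apply, map_smul, one_apply_eq_self]
  have hA := A.isUnit_of_surjective_sub_smul_one (fun x ↦ hc x x.2) hη hA_surj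
  refine le_antisymm ?_ fun y hy ↦ ?_
  · rintro _ ⟨z, rfl⟩
    exact ⟨S z, by rw [coe_coe, coe_coe, pow_succ, mul_apply_eq_comp]⟩
  · obtain ⟨⟨_, z, rfl⟩, hz⟩ := (isUnit_iff_bijective.1 hA).2 ⟨y, hy⟩
    exact ⟨z, by rw [coe_coe, pow_succ', mul_apply_eq_comp]; exact congrArg Subtype.val hz⟩

end ContinuousLinearMap

theorem isFredholm_of_continuousLinearEquiv {E : Type*} [NormedAddCommGroup E] [NormedSpace ℂ E]
    {R : E →L[ℂ] E} {E₁ G : Submodule ℂ E} [FiniteDimensional ℂ (E ⧸ E₁)] [FiniteDimensional ℂ G]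
    (e : (E₁ × G) ≃L[ℂ] E)
    (he : ∀ v, e v = R v.1 + v.2) : IsFredholm R := by
  let π : E →L[ℂ] G := ContinuousLinearMap.snd ℂ E₁ G ∘L (e.symm : E →L[ℂ] (E₁ × G))
  have hC_le : π.ker ≤ R.range := by
    intro y hy
    refine ⟨(e.symm y).1, ?_⟩
    have := he (e.symm y)
    rw [e.apply_symm_apply, show (e.symm y).2 = 0 from hy] at this
    simpa using this.symm
  have : FiniteDimensional ℂ (E ⧸ π.ker) :=
    (LinearMap.quotKerEquivRange (π : E →ₗ[ℂ] G)).symm.finiteDimensional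
  refine ⟨?_, Submodule.isClosed_mono_of_finiteDimensional_quotient π.isClosed_ker hC_le,
    Module.Finite.of_surjective _ (Submodule.factor_surjective hC_le)⟩
  have hdisj : ∀ x ∈ R.ker, x ∈ E₁ → x = 0 := by
    intro x hx hx₁
    have := he (⟨x, hx₁⟩, 0)
    rw [show R x = 0 from hx, ZeroMemClass.coe_zero, add_zero, ← e.map_zero] at this
    simpa using congrArg (fun v ↦ (v.1 : E)) (e.injective this)
  refine Module.Finite.of_injective (E₁.mkQ ∘ₗ R.ker.subtype) ?_
  refine (injective_iff_map_eq_zero _).2 fun x hx ↦ Subtype.ext ?_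
  exact hdisj x x.2 ((Submodule.Quotient.mk_eq_zero E₁).1 hx)

theorem IsFredholm.eventually_isFredholm {S : X →L[ℂ] X} (hS : IsFredholm S) :
    ∀ᶠ R in 𝓝 S, IsFredholm R := by
  obtain ⟨hker, -, hcoker⟩ := hS
  obtain ⟨X₁, hX₁, hcompl₁⟩ :=
    (Submodule.ClosedComplemented.of_finiteDimensional S.ker).exists_isClosed_isCompl
  obtain ⟨G, hcompl₂⟩ := S.range.exists_isCompl
  have : CompleteSpace X₁ := hX₁.completeSpace_coe
  have : FiniteDimensional ℂ (X ⧸ X₁) :=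
    (Submodule.quotientEquivOfIsCompl _ _ hcompl₁.symm).symm.finiteDimensional
  have : FiniteDimensional ℂ G := (Submodule.quotientEquivOfIsCompl _ _ hcompl₂).finiteDimensional
  have : CompleteSpace G := FiniteDimensional.complete ℂ G
  let Φ : (X →L[ℂ] X) → ((X₁ × G) →L[ℂ] X) := fun R ↦
    R ∘L (X₁.subtypeL ∘L ContinuousLinearMap.fst ℂ X₁ G) +
      G.subtypeL ∘L ContinuousLinearMap.snd ℂ X₁ G
  have hΦ : Continuous Φ := (continuous_id.clm_comp continuous_const).add continuous_const
  have hΦS : Function.Bijective (Φ S) := by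
    constructor
    · refine (injective_iff_map_eq_zero _).2 fun ⟨⟨x, hx⟩, ⟨g, hg⟩⟩ h ↦ ?_
      change S x + g = 0 at h
      have hg0 : g = 0 := (Submodule.disjoint_def.1 hcompl₂.disjoint) g
        ⟨-x, by simp [eq_neg_of_add_eq_zero_right h]⟩ hg
      rw [hg0, add_zero] at h
      have hx0 : x = 0 := (Submodule.disjoint_def.1 hcompl₁.disjoint) x h hx
      simp [hx0, hg0]
    · intro y
      obtain ⟨_, ⟨x, rfl⟩, g, hg, rfl⟩ :=
        Submodule.mem_sup.1 (hcompl₂.sup_eq_top ▸ Submodule.mem_top : y ∈ S.range ⊔ G)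
      obtain ⟨k, hk, x₁, hx₁, rfl⟩ :=
        Submodule.mem_sup.1 (hcompl₁.sup_eq_top ▸ Submodule.mem_top : x ∈ S.ker ⊔ X₁)
      exact ⟨(⟨x₁, hx₁⟩, ⟨g, hg⟩), by simp [Φ, show S k = 0 from hk]⟩
  have hmem : Φ S ∈ Set.range ((↑) : ((X₁ × G) ≃L[ℂ] X) → ((X₁ × G) →L[ℂ] X)) :=
    ⟨ContinuousLinearEquiv.ofBijective (Φ S) (LinearMap.ker_eq_bot.2 hΦS.1)
      (LinearMap.range_eq_top.2 hΦS.2), rfl⟩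
  filter_upwards [hΦ.continuousAt.preimage_mem_nhds (ContinuousLinearEquiv.isOpen.mem_nhds hmem)]
    with R ⟨e, he⟩
  exact isFredholm_of_continuousLinearEquiv e fun v ↦ by
    rw [← ContinuousLinearEquiv.coe_coe, he]; rfl

theorem IsFredholm.isClosed_range_pow {S : X →L[ℂ] X} (hS : IsFredholm S) (n : ℕ) :
    IsClosed ((S ^ n).range : Set X) := by
  have := hS.1
  induction n with
  | zero => simp [Module.End.one_eq_id]
  | succ n ih =>
    rw [ContinuousLinearMap.toLinearMap_pow, pow_succ', Module.End.mul_eq_comp,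
      LinearMap.range_comp, ← ContinuousLinearMap.toLinearMap_pow]
    exact S.isClosed_map_of_finiteDimensional_ker hS.2.1 ih

theorem IsFredholm.isWeyl_of_ker_pow_eq_ker_pow_succ {S : X →L[ℂ] X} (hS : IsFredholm S) {p : ℕ}
    (hp : (S ^ p).ker = (S ^ (p + 1)).ker)
    (hperturb : ∀ η : ℂ, η ≠ 0 → IsFredholm (S - η • 1) → (S - η • 1).range ≠ ⊤ →
      (S - η • 1).ker ≠ ⊥) :
    IsWeyl S := by
  rw [ContinuousLinearMap.toLinearMap_pow, ContinuousLinearMap.toLinearMap_pow] at hp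
  obtain ⟨c, hc₀, hc⟩ := S.exists_bound_of_ker_inf_range_pow_eq_bot (hS.isClosed_range_pow p)
    (hS.isClosed_range_pow (p + 1))
    (by rw [ContinuousLinearMap.toLinearMap_pow]; exact Module.End.ker_inf_range_pow_eq_bot _ hp)
  have hnear : ∀ᶠ η in 𝓝 (0 : ℂ), IsFredholm (S - η • 1) ∧ 2 * ‖η‖ < c := by
    have hcont : Tendsto (fun η : ℂ ↦ S - η • (1 : X →L[ℂ] X)) (𝓝 0) (𝓝 S) :=
      Continuous.tendsto' (by fun_prop) 0 S (by simp)
    filter_upwards [hcont.eventually hS.eventually_isFredholm,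
      Metric.ball_mem_nhds 0 (half_pos hc₀)] with η hη hball
    exact ⟨hη, by rw [mem_ball_zero_iff] at hball; linarith⟩
  obtain ⟨η, ⟨hFη, hη⟩, hη₀ : η ≠ 0⟩ :=
    ((hnear.filter_mono nhdsWithin_le_nhds).and (self_mem_nhdsWithin (s := {0}ᶜ))).exists
  have hker := S.ker_sub_smul_one_eq_bot hc hη₀ (by linarith [norm_nonneg η])
  have hsurj : (S - η • 1).range = ⊤ := by
    by_contra h
    exact hperturb η hη₀ hFη h hker
  have hdesc :=
    S.range_pow_succ_eq_of_range_sub_smul_one_eq_top (hS.isClosed_range_pow p) hc hη hsurj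
  rw [ContinuousLinearMap.toLinearMap_pow, ContinuousLinearMap.toLinearMap_pow] at hdesc
  have := hS.1
  exact ⟨hS, Module.End.finrank_ker_eq_finrank_quotient_range _ hp hdesc⟩

theorem notMem_spectrum_iff_isUnit_sub_smul_one {R A : Type*} [CommSemiring R] [Ring A]
    [Algebra R A] {r : R} {a : A} : r ∉ spectrum R a ↔ IsUnit (a - r • 1) := by
  rw [spectrum.notMem_iff, Algebra.algebraMap_eq_smul_one, ← IsUnit.neg_iff, neg_sub]

theorem isWeyl_of_isUnit {E : Type*} [NormedAddCommGroup E] [NormedSpace ℂ E] {S : E →L[ℂ] E}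
    (hS : IsUnit S) : IsWeyl S := by
  obtain ⟨u, rfl⟩ := hS
  have hbij := (ContinuousLinearEquiv.ofUnit u).bijective
  have hker : (u : E →L[ℂ] E).ker = ⊥ := LinearMap.ker_eq_bot.2 hbij.1
  have hrange : (u : E →L[ℂ] E).range = ⊤ := LinearMap.range_eq_top.2 hbij.2
  refine ⟨⟨?_, ?_, ?_⟩, ?_⟩
  · rw [hker]; infer_instance
  · rw [hrange]; exact isClosed_univ
  · rw [hrange]; infer_instance
  · rw [hker, hrange, finrank_bot, Module.finrank_zero_of_subsingleton]

theorem ker_ne_bot_of_mem_leftPoles {T : X →L[ℂ] X} {l : ℂ} (hl : l ∈ leftPoles T) :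
    (T - l • 1).ker ≠ ⊥ := by
  obtain ⟨hla, p, -, hmin, hclosed⟩ := hl
  intro hker
  have hp : p = 0 := by
    by_contra hp
    refine hmin 0 (Nat.pos_of_ne_zero hp) ?_
    rw [zero_add, pow_one, hker, pow_zero]
    exact LinearMap.ker_eq_bot.2 fun _ _ h ↦ h
  subst hp
  simp only [zero_add, pow_one] at hclosed
  obtain ⟨K, hK⟩ := (T - l • 1).antilipschitz_of_injective_of_isClosed_range
    (LinearMap.ker_eq_bot.1 hker) hclosed
  refine hla ⟨(K + 1 : ℝ)⁻¹, by positivity, fun x ↦ ?_⟩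
  rw [inv_mul_le_iff₀ (by positivity)]
  calc ‖x‖ ≤ K * ‖(T - l • 1) x‖ := (T - l • 1).bound_of_antilipschitz hK x
    _ ≤ (K + 1) * ‖(T - l • 1) x‖ := by gcongr; linarith

theorem IsFredholm.isWeyl_of_spectrum_diff_sigma_e_eq {T : X →L[ℂ] X} {l : ℂ}
    (hF : IsFredholm (T - l • 1)) (H : spectrum ℂ T \ sigma_e T = leftPoles0 T) :
    IsWeyl (T - l • 1) := by
  by_cases hl : l ∈ spectrum ℂ T
  swap
  · exact isWeyl_of_isUnit (notMem_spectrum_iff_isUnit_sub_smul_one.1 hl)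
  obtain ⟨⟨-, p, hp, -⟩, -⟩ : l ∈ leftPoles0 T := H ▸ ⟨hl, not_not.2 hF⟩
  refine hF.isWeyl_of_ker_pow_eq_ker_pow_succ hp fun η _ hFη hrange ↦ ?_
  rw [sub_sub, ← add_smul] at hFη hrange ⊢
  have hspec : l + η ∈ spectrum ℂ T := by
    by_contra h
    exact hrange (LinearMap.range_eq_top.2 (ContinuousLinearMap.isUnit_iff_bijective.1
      (notMem_spectrum_iff_isUnit_sub_smul_one.1 h)).2)
  obtain ⟨hpole, -⟩ : l + η ∈ leftPoles0 T := H ▸ ⟨hspec, not_not.2 hFη⟩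
  exact ker_ne_bot_of_mem_leftPoles hpole

/-- `T ∈ (ab_e)` iff `T ∈ (ab)` and `σ_e(T) = σ_w(T)`. -/
theorem stmt10 (T : X →L[ℂ] X) :
    spectrum ℂ T \ sigma_e T = leftPoles0 T ↔
      spectrum ℂ T \ sigma_w T = leftPoles0 T ∧ sigma_e T = sigma_w T := by
  refine ⟨fun H ↦ ?_, fun ⟨H, he⟩ ↦ he ▸ H⟩
  have he : sigma_e T = sigma_w T := Set.ext fun l ↦
    ⟨fun hl hW ↦ hl hW.1, fun hl hF ↦ hl (hF.isWeyl_of_spectrum_diff_sigma_e_eq H)⟩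
  exact ⟨he ▸ H, he⟩
end

section
/- A bounded linear operator T on a complex Banach space belongs to class (aw_e) if and only if T belongs to class (W_e) and E^0(T) = E_a^0(T). -/
open Filter Topology

variable {X : Type*} [NormedAddCommGroup X] [NormedSpace ℂ X] [CompleteSpace X]

/-!
`E⁰(T) ⊆ E_a⁰(T)` always holds, so only `E_a⁰(T) ⊆ E⁰(T)` has to be derived from `(aw_e)`.
A point `λ ∈ E_a⁰(T)` then lies in `σ(T) \ σ_e(T)`, and since `σ_e(T)` is closed, every point
of `σ(T)` close to `λ` lies outside `σ_e(T)`, hence in `E_a⁰(T) ⊆ σ_a(T)`; as `λ` is isolated in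
`σ_a(T)`, it is isolated in `σ(T)`.

Closedness of `σ_e(T)` is the stability of Fredholm operators under small perturbations. If `v`
is a quasi-inverse of `u` (i.e. `vu - 1` and `uv - 1` have finite rank) and `‖v‖ ‖D‖ < 1`, then
`(1 + vD)⁻¹ v` is a left and `v (1 + Dv)⁻¹` a right quasi-inverse of `u + D`, and a left and a
right quasi-inverse agree modulo finite rank.
-/

open scoped LinearMap.FiniteRangeSetoid

namespace LinearMap

variable {K V V₂ : Type*} [CommRing K] [AddCommGroup V] [Module K V] [AddCommGroup V₂] [Module K V₂]

lemma FiniteRangeSetoid.add_equiv_add_right {x y : V →ₗ[K] V₂} (h : x ≈ y) (z : V →ₗ[K] V₂) :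
    x + z ≈ y + z := by
  rw [FiniteRangeSetoid.equiv_iff_hasNoetherianRange] at *
  rwa [add_sub_add_right_eq_sub]

lemma IsLeftQuasiInverse.isQuasiInverse {u : V →ₗ[K] V₂} {w w' : V₂ →ₗ[K] V}
    (hw : w.IsLeftQuasiInverse u) (hw' : w'.IsRightQuasiInverse u) : w.IsQuasiInverse u := by
  have hww' : w ≈ w' :=
    calc w = w ∘ₗ .id := rfl
      _ ≈ w ∘ₗ (u ∘ₗ w') := by grw [hw'.equiv]
      _ = (w ∘ₗ u) ∘ₗ w' := rfl
      _ ≈ .id ∘ₗ w' := by grw [hw.equiv]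
      _ = w' := rfl
  exact ⟨hw, hw'.congr hww' (Setoid.refl u)⟩

end LinearMap

namespace ContinuousLinearMap

section QuasiInverse

variable {R E F : Type*} [CommRing R]
  [AddCommGroup E] [Module R E] [TopologicalSpace E]
  [AddCommGroup F] [Module R F] [TopologicalSpace F]

theorem isLeftQuasiInverse_inv_comp_add [IsTopologicalAddGroup E] [ContinuousAdd F]
    {u D : E →L[R] F} {v : F →L[R] E} (hvu : v.IsLeftQuasiInverse u) (a : (E →L[R] E)ˣ)
    (ha : (a : E →L[R] E) = 1 + v ∘L D) :
    ((↑a⁻¹ : E →L[R] E) ∘L v).IsLeftQuasiInverse (u + D) :=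
  calc (↑a⁻¹ : E →ₗ[R] E) ∘ₗ ((v : F →ₗ[R] E) ∘ₗ (u + D : E →L[R] F))
      = (↑a⁻¹ : E →ₗ[R] E) ∘ₗ ((v : F →ₗ[R] E) ∘ₗ u + ((v ∘L D : E →L[R] E) : E →ₗ[R] E)) := by
        simp [LinearMap.comp_add]
    _ ≈ (↑a⁻¹ : E →ₗ[R] E) ∘ₗ (.id + ((v ∘L D : E →L[R] E) : E →ₗ[R] E)) :=
        LinearMap.FiniteRangeSetoid.equiv_comp_left
          (LinearMap.FiniteRangeSetoid.add_equiv_add_right hvu.equiv _)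
    _ = ((↑a⁻¹ * ↑a : E →L[R] E) : E →ₗ[R] E) := by rw [ha]; rfl
    _ = .id := by rw [Units.inv_mul]; rfl

theorem isRightQuasiInverse_comp_inv_add [IsTopologicalAddGroup F]
    {u D : E →L[R] F} {v : F →L[R] E} (hvu : v.IsRightQuasiInverse u) (b : (F →L[R] F)ˣ)
    (hb : (b : F →L[R] F) = 1 + D ∘L v) :
    (v ∘L (↑b⁻¹ : F →L[R] F)).IsRightQuasiInverse (u + D) :=
  calc ((u + D : E →L[R] F) : E →ₗ[R] F) ∘ₗ v ∘ₗ (↑b⁻¹ : F →ₗ[R] F)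
      = ((u : E →ₗ[R] F) ∘ₗ v + ((D ∘L v : F →L[R] F) : F →ₗ[R] F)) ∘ₗ (↑b⁻¹ : F →ₗ[R] F) := by
        simp [LinearMap.add_comp, LinearMap.comp_assoc]
    _ ≈ (.id + ((D ∘L v : F →L[R] F) : F →ₗ[R] F)) ∘ₗ (↑b⁻¹ : F →ₗ[R] F) :=
        LinearMap.FiniteRangeSetoid.equiv_comp_right
          (LinearMap.FiniteRangeSetoid.add_equiv_add_right hvu.equiv _)
    _ = ((↑b * ↑b⁻¹ : F →L[R] F) : F →ₗ[R] F) := by rw [hb]; rfl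
    _ = .id := by rw [Units.mul_inv]; rfl

end QuasiInverse

variable {𝕜 E F : Type*} [NontriviallyNormedField 𝕜]
  [NormedAddCommGroup E] [NormedSpace 𝕜 E] [CompleteSpace E]
  [NormedAddCommGroup F] [NormedSpace 𝕜 F] [CompleteSpace F]

theorem isStrictMap_of_isClosed_range {u : E →L[𝕜] F} (h : IsClosed (u.range : Set F)) :
    IsStrictMap u :=
  have : CompleteSpace u.range := h.completeSpace_coe
  u.rangeRestrict.isQuotientMap u.toLinearMap.surjective_rangeRestrict

theorem IsFredholm.add_of_norm_mul_lt_one [CompleteSpace 𝕜] {u D : E →L[𝕜] F} {v : F →L[𝕜] E}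
    (hvu : v.IsQuasiInverse u) (hD : ‖v‖ * ‖D‖ < 1) : (u + D).IsFredholm := by
  let a := Units.oneSub (-(v ∘L D)) (by rw [norm_neg]; exact (opNorm_comp_le _ _).trans_lt hD)
  let b := Units.oneSub (-(D ∘L v))
    (by rw [norm_neg]; exact (opNorm_comp_le _ _).trans_lt (mul_comm ‖v‖ ‖D‖ ▸ hD))
  have hleft := isLeftQuasiInverse_inv_comp_add (D := D) hvu.1 a (by simp [a, Units.val_oneSub])
  have hright := isRightQuasiInverse_comp_inv_add (D := D) hvu.2 b (by simp [b, Units.val_oneSub])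
  exact .of_isQuasiInverse (hleft.isQuasiInverse hright)

theorem isOpen_setOf_isFredholm [CompleteSpace 𝕜] : IsOpen {u : E →L[𝕜] F | u.IsFredholm} := by
  refine Metric.isOpen_iff.2 fun u hu => ?_
  obtain ⟨v, hvu⟩ := hu.exists_isQuasiInverse
  refine ⟨(‖v‖ + 1)⁻¹, by positivity, fun w hw => ?_⟩
  rw [Metric.mem_ball, dist_eq_norm] at hw
  have hD : ‖v‖ * ‖w - u‖ < 1 :=
    calc ‖v‖ * ‖w - u‖ ≤ (‖v‖ + 1) * ‖w - u‖ := by gcongr; linarith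
      _ < (‖v‖ + 1) * (‖v‖ + 1)⁻¹ := by gcongr
      _ = 1 := mul_inv_cancel₀ (by positivity)
  simpa using IsFredholm.add_of_norm_mul_lt_one hvu hD

end ContinuousLinearMap

theorem isFredholm_iff_continuousLinearMap_isFredholm (S : X →L[ℂ] X) :
    IsFredholm S ↔ S.IsFredholm :=
  ⟨fun ⟨hker, hrange, hcoker⟩ => ⟨S.isStrictMap_of_isClosed_range hrange, hrange, hker, hcoker,
      .of_finiteDimensional _⟩,
    fun h => ⟨h.finite_ker, h.isClosed_range, h.finite_coker⟩⟩

theorem isClosed_sigma_e (T : X →L[ℂ] X) : IsClosed (sigma_e T) := by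
  have : (sigma_e T)ᶜ = (fun l : ℂ => T - l • 1) ⁻¹' {u | u.IsFredholm} := by
    ext l
    simp [sigma_e, isFredholm_iff_continuousLinearMap_isFredholm]
  rw [← isOpen_compl_iff, this]
  exact ContinuousLinearMap.isOpen_setOf_isFredholm.preimage (by fun_prop)

omit [CompleteSpace X] in
lemma sigma_a_subset_spectrum (T : X →L[ℂ] X) : sigma_a T ⊆ spectrum ℂ T := by
  intro l hl hns
  obtain ⟨U, hU⟩ : IsUnit (T - l • 1) := by
    simpa [Algebra.algebraMap_eq_smul_one] using (spectrum.mem_resolventSet_iff.1 hns).neg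
  set V : X →L[ℂ] X := ↑U⁻¹
  refine hl ⟨(‖V‖ + 1)⁻¹, by positivity, fun x => ?_⟩
  rw [← hU, inv_mul_le_iff₀ (by positivity)]
  calc ‖x‖ = ‖V ((U : X →L[ℂ] X) x)‖ := by
        rw [← ContinuousLinearMap.comp_apply, ← ContinuousLinearMap.mul_def, U.inv_mul]; rfl
    _ ≤ ‖V‖ * ‖(U : X →L[ℂ] X) x‖ := V.le_opNorm _
    _ ≤ (‖V‖ + 1) * ‖(U : X →L[ℂ] X) x‖ := by gcongr; linarith

omit [CompleteSpace X] in
lemma mem_sigma_a_of_ker_ne_bot (T : X →L[ℂ] X) {l : ℂ}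
    (h : LinearMap.ker ((T - l • 1 : X →L[ℂ] X) : X →ₗ[ℂ] X) ≠ ⊥) : l ∈ sigma_a T := by
  obtain ⟨x, hx, hx0⟩ := Submodule.exists_mem_ne_zero_of_ne_bot h
  rintro ⟨c, hc, hbdd⟩
  have : c * ‖x‖ ≤ 0 := by simpa [show (T - l • 1) x = 0 from hx] using hbdd x
  exact hx0 (norm_le_zero_iff.1 (nonpos_of_mul_nonpos_right this hc))

lemma mem_isoPts_of_diff_subset {A B C : Set ℂ} {l : ℂ} (hC : IsClosed C) (hABC : A \ C ⊆ B)
    (hlA : l ∈ A) (hlC : l ∉ C) (hlB : l ∈ isoPts B) : l ∈ isoPts A := by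
  refine ⟨hlA, ?_⟩
  have hB := hlB.2
  rw [accPt_iff_frequently_nhdsNE, not_frequently] at hB ⊢
  filter_upwards [hB, nhdsWithin_le_nhds (hC.isOpen_compl.mem_nhds hlC)] with y hyB hyC hyA
  exact hyB (hABC ⟨hyA, hyC⟩)

omit [CompleteSpace X] in
lemma Eset0_subset_Ea0 (T : X →L[ℂ] X) : Eset0 T ⊆ Ea0 T := by
  rintro l ⟨⟨hl, hl_iso⟩, hk, hfd⟩
  exact ⟨⟨mem_sigma_a_of_ker_ne_bot T hk, fun hacc => hl_iso (hacc.mono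
    (principal_mono.2 (sigma_a_subset_spectrum T)))⟩, hk, hfd⟩

lemma Ea0_subset_Eset0 (T : X →L[ℂ] X) (h : spectrum ℂ T \ sigma_e T = Ea0 T) :
    Ea0 T ⊆ Eset0 T := by
  intro l hl
  have hl' : l ∈ spectrum ℂ T \ sigma_e T := h ▸ hl
  refine ⟨mem_isoPts_of_diff_subset (isClosed_sigma_e T) ?_ hl'.1 hl'.2 hl.1, hl.2⟩
  rw [h]
  exact fun y hy => hy.1.1

/-- `T ∈ (aw_e)` iff `T ∈ (W_e)` and `E⁰(T) = E_a⁰(T)`. -/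
theorem stmt15 (T : X →L[ℂ] X) :
    spectrum ℂ T \ sigma_e T = Ea0 T ↔
      spectrum ℂ T \ sigma_e T = Eset0 T ∧ Eset0 T = Ea0 T := by
  refine ⟨fun h => ?_, fun ⟨h1, h2⟩ => h1.trans h2⟩
  have hE : Eset0 T = Ea0 T := (Eset0_subset_Ea0 T).antisymm (Ea0_subset_Eset0 T h)
  exact ⟨h.trans hE.symm, hE⟩
end
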